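/- Let $1 \le t \le k_1 \le \cdots \le k_r \le n$ and suppose $n$ is sufficiently large in terms of $k_{r-1}, k_r, t$. Let $\mathcal{F}_1, \dots, \mathcal{F}_r$ be families of subsets of $[n]$ with each member of $\mathcal{F}_i$ of size at most $k_i$. Suppose that for all $i \ne j$ and all $A \in \mathcal{F}_i$, $B \in \mathcal{F}_j$ with $|A \cap B| < t$, we have $|A \triangle B| \le \min\{k_i, k_j\} - t$. Then $\prod_{i=1}^r |\mathcal{F}_i| \le \prod_{i=1}^r \left( \sum_{j=0}^{k_i - t} \binom{n-t}{k_i - t - j} \right)$. -/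

import Mathlib

/-!
For two families with size bounds `k ≤ l` the cross condition gives
`|F| |G| ≤ (∑_{j ≤ k-t} C(n-t, j)) (∑_{j ≤ l-t} C(n-t, j))`; multiplying these bounds over the
pairs `(i, σ i)` for a cyclic permutation `σ` of the `r` families bounds the square of the product.

For a pair: if `|F| = O(n^(k-t-1))`, every member of `G` meets a fixed `A ∈ F` in `t` points or
is within distance `k - t` of it, so `|G| = O(n^(l-t))` and `|F| |G| = O(n^((k-t)+(l-t)-1))`,
which is below the target for large `n`; symmetrically if `|G| = O(n^(l-t-1))`. Otherwise `F`
contains a sunflower with more petals than a member of `G` has points. A member of `G` misses some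
petal, so it meets the kernel `Y` in `t` points or lies within distance `k - t - 1` of a subset
of `Y`. The latter are few, so a `t`-subset `T ⊆ Y` lies in a positive proportion of `G`. A member
of `F` not containing `T` would make this star too small, so `T` lies in every member of `F`, and
by the same count in every member of `G`. Sets of size `≤ k` containing a fixed `t`-set number at
most `∑_{j ≤ k-t} C(n-t, j)`. When `k = t` the cross condition forces equality instead.
-/

open Finset
open scoped symmDiff Nat

namespace AlmostCrossIntersecting

section Counting

variable {α β ι : Type*} [DecidableEq α]

lemma card_le_mul_of_cover [DecidableEq β] {H : Finset β} {I : Finset ι} (p : ι → β → Prop)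
    [∀ i, DecidablePred (p i)] {N : ℕ} (hcover : ∀ B ∈ H, ∃ i ∈ I, p i B)
    (hN : ∀ i ∈ I, #{B ∈ H | p i B} ≤ N) : #H ≤ #I * N := by
  refine (card_le_card fun B hB => ?_).trans (card_biUnion_le_card_mul I _ N hN)
  obtain ⟨i, hi, hpB⟩ := hcover B hB
  exact mem_biUnion.2 ⟨i, hi, mem_filter.2 ⟨hB, hpB⟩⟩

lemma card_le_sum_choose_of_injOn {H : Finset β} {U : Finset α} {m : ℕ} (f : β → Finset α)
    (hU : ∀ B ∈ H, f B ⊆ U) (hm : ∀ B ∈ H, #(f B) ≤ m) (hf : Set.InjOn f H) :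
    #H ≤ ∑ d ∈ range (m + 1), (#U).choose d := by
  have hmaps : Set.MapsTo f H ((range (m + 1)).biUnion (U.powersetCard ·)) := fun B hB =>
    mem_biUnion.2 ⟨#(f B), mem_range.2 (Nat.lt_succ_of_le (hm B hB)),
      mem_powersetCard.2 ⟨hU B hB, rfl⟩⟩
  refine (card_le_card_of_injOn f hmaps hf).trans (card_biUnion_le.trans ?_)
  simp only [card_powersetCard, le_refl]

lemma sum_range_choose_le {N n : ℕ} (hN : N ≤ n) (hn : 1 ≤ n) (m : ℕ) :
    ∑ d ∈ range (m + 1), N.choose d ≤ (m + 1) * n ^ m := by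
  refine (sum_le_card_nsmul _ _ (n ^ m) fun d hd => ?_).trans (by simp)
  calc N.choose d ≤ N ^ d := Nat.choose_le_pow N d
    _ ≤ n ^ d := Nat.pow_le_pow_left hN d
    _ ≤ n ^ m := Nat.pow_le_pow_right hn (Nat.lt_succ_iff.1 (mem_range.1 hd))

variable [Fintype α]

lemma card_le_sum_choose_of_superset {H : Finset (Finset α)} {X : Finset α} {c : ℕ}
    (h : ∀ B ∈ H, X ⊆ B ∧ #B ≤ c) :
    #H ≤ ∑ d ∈ range (c - #X + 1), (Fintype.card α - #X).choose d := by
  rw [← card_compl]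
  refine card_le_sum_choose_of_injOn (· \ X) (fun B _ y hy => mem_compl.2 (mem_sdiff.1 hy).2)
    (fun B hB => ?_) fun B hB B' hB' hBB' => ?_
  · rw [card_sdiff_of_subset (h B hB).1]
    have := (h B hB).2
    omega
  · rw [← union_sdiff_of_subset (h B hB).1, ← union_sdiff_of_subset (h B' hB').1]
    exact congrArg (X ∪ ·) hBB'

variable [Nonempty α]

lemma card_le_of_injOn {H : Finset β} {m : ℕ} (f : β → Finset α) (hm : ∀ B ∈ H, #(f B) ≤ m)
    (hf : Set.InjOn f H) : #H ≤ (m + 1) * Fintype.card α ^ m :=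
  (card_le_sum_choose_of_injOn (U := univ) f (fun _ _ => subset_univ _) hm hf).trans
    (sum_range_choose_le (by simp) Fintype.card_pos m)

lemma card_le_of_card_symmDiff_le {H : Finset (Finset α)} {X : Finset α} {m : ℕ}
    (h : ∀ B ∈ H, #(X ∆ B) ≤ m) : #H ≤ (m + 1) * Fintype.card α ^ m :=
  card_le_of_injOn (X ∆ ·) h fun _ _ _ _ hAB => symmDiff_right_injective X hAB

lemma card_le_of_mem_symmDiff {H : Finset (Finset α)} {X : Finset α} {x : α} {m : ℕ}
    (h : ∀ B ∈ H, x ∈ X ∆ B ∧ #(X ∆ B) ≤ m + 1) : #H ≤ (m + 1) * Fintype.card α ^ m := by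
  refine card_le_of_injOn (fun B => (X ∆ B).erase x) (fun B hB => ?_) fun B hB B' hB' hBB' => ?_
  · have := card_erase_of_mem (h B hB).1
    have := (h B hB).2
    omega
  · apply symmDiff_right_injective X
    change X ∆ B = X ∆ B'
    rw [← insert_erase (h B hB).1, ← insert_erase (h B' hB').1]
    exact congrArg (insert x) hBB'

lemma card_le_of_superset {H : Finset (Finset α)} {X : Finset α} {c : ℕ}
    (h : ∀ B ∈ H, X ⊆ B ∧ #B ≤ c) : #H ≤ (c - #X + 1) * Fintype.card α ^ (c - #X) :=
  (card_le_sum_choose_of_superset h).trans (sum_range_choose_le (Nat.sub_le _ _) Fintype.card_pos _)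

lemma card_le_of_le_card_inter {H : Finset (Finset α)} {X : Finset α} {τ c : ℕ}
    (hc : ∀ B ∈ H, #B ≤ c) (hτ : ∀ B ∈ H, τ ≤ #(X ∩ B)) :
    #H ≤ 2 ^ #X * ((c - τ + 1) * Fintype.card α ^ (c - τ)) := by
  calc #H ≤ #(X.powersetCard τ) * ((c - τ + 1) * Fintype.card α ^ (c - τ)) := by
        refine card_le_mul_of_cover (fun T B => T ⊆ B) (fun B hB => ?_) fun T hT => ?_
        · obtain ⟨T, hT, hTcard⟩ := exists_subset_card_eq (hτ B hB)
          exact ⟨T, mem_powersetCard.2 ⟨hT.trans inter_subset_left, hTcard⟩,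
            hT.trans inter_subset_right⟩
        · have := card_le_of_superset (H := {B ∈ H | T ⊆ B}) (X := T) (c := c)
            fun B hB => ⟨(mem_filter.1 hB).2, hc B (mem_filter.1 hB).1⟩
          rwa [(mem_powersetCard.1 hT).2] at this
    _ ≤ 2 ^ #X * ((c - τ + 1) * Fintype.card α ^ (c - τ)) := by
        rw [card_powersetCard]
        exact Nat.mul_le_mul_right _ (Nat.choose_le_two_pow _ _)

lemma card_le_of_card_sdiff_le {H : Finset (Finset α)} {Y : Finset α} {m : ℕ}
    (h : ∀ B ∈ H, #(B \ Y) ≤ m) : #H ≤ 2 ^ #Y * ((m + 1) * Fintype.card α ^ m) := by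
  rw [← card_powerset]
  refine card_le_mul_of_cover (fun S B => B ∩ Y = S) (fun B _ => ?_) fun S _ => ?_
  · exact ⟨B ∩ Y, mem_powerset.2 inter_subset_right, rfl⟩
  · refine card_le_of_card_symmDiff_le (X := S) fun B hB => ?_
    obtain ⟨hBH, rfl⟩ := mem_filter.1 hB
    rw [symmDiff_comm, symmDiff_of_ge inter_subset_left, sdiff_inter_self_left]
    exact h B hBH

lemma card_le_of_le_card_inter_or_card_symmDiff_le {H : Finset (Finset α)} {X : Finset α}
    {t c : ℕ} (hc : ∀ B ∈ H, #B ≤ c) (h : ∀ B ∈ H, t ≤ #(X ∩ B) ∨ #(X ∆ B) ≤ c - t) :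
    #H ≤ (2 ^ #X + 1) * ((c - t + 1) * Fintype.card α ^ (c - t)) := by
  rw [← card_filter_add_card_filter_not (fun B => t ≤ #(X ∩ B)), add_one_mul]
  gcongr
  · exact card_le_of_le_card_inter (fun B hB => hc B (mem_filter.1 hB).1)
      fun B hB => (mem_filter.1 hB).2
  · refine card_le_of_card_symmDiff_le (X := X) fun B hB => ?_
    obtain ⟨hBH, hB⟩ := mem_filter.1 hB
    exact (h B hBH).resolve_left hB

end Counting

section Sunflower

variable {α : Type*} [DecidableEq α]

lemma exists_hitting_set {A : Finset (Finset α)} {s q : ℕ} (hs : ∀ a ∈ A, #a ≤ s)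
    (hq : ∀ M ⊆ A, (M : Set (Finset α)).PairwiseDisjoint id → #M ≤ q) :
    ∃ U : Finset α, #U ≤ q * s ∧ ∀ a ∈ A, a.Nonempty → ∃ x ∈ U, x ∈ a := by
  classical
  set D : Finset (Finset (Finset α)) :=
    {M ∈ A.powerset | (M : Set (Finset α)).PairwiseDisjoint id}
  obtain ⟨M, hM, hMmax⟩ := exists_max_image D card ⟨∅, by simp [D]⟩
  obtain ⟨hMA, hMdisj⟩ := mem_filter.1 hM
  rw [mem_powerset] at hMA
  refine ⟨M.biUnion id, ?_, fun a ha hne => ?_⟩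
  · calc #(M.biUnion id) ≤ #M * s := card_biUnion_le_card_mul _ _ _ fun a ha => hs a (hMA ha)
      _ ≤ q * s := Nat.mul_le_mul_right _ (hq M hMA hMdisj)
  · by_contra! hmiss
    have hdisj : Disjoint a (M.biUnion id) := disjoint_right.2 hmiss
    have haM : a ∉ M := fun haM => hne.ne_empty (disjoint_self.1 <|
      hdisj.mono_right (subset_biUnion_of_mem id haM))
    have hins : insert a M ∈ D := by
      refine mem_filter.2 ⟨mem_powerset.2 (insert_subset ha hMA), ?_⟩
      rw [coe_insert]
      exact hMdisj.insert fun w hw _ => hdisj.mono_right (subset_biUnion_of_mem id hw)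
    have := hMmax _ hins
    rw [card_insert_of_notMem haM] at this
    omega

lemma exists_lt_card_filter_mem {A : Finset (Finset α)} {U : Finset α} {N : ℕ}
    (hcover : ∀ a ∈ A, ∃ x ∈ U, x ∈ a) (hN : #U * N < #A) : ∃ x ∈ U, N < #{a ∈ A | x ∈ a} := by
  by_contra! hsmall
  exact hN.not_ge (card_le_mul_of_cover (fun x a => x ∈ a) hcover hsmall)

def IsSunflower (P : Finset (Finset α)) (Y : Finset α) : Prop :=
  (P : Set (Finset α)).Pairwise (· ∩ · = Y)

lemma IsSunflower.image_insert {P : Finset (Finset α)} {Y : Finset α} {x : α}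
    (hP : IsSunflower P Y) (hx : ∀ c ∈ P, x ∉ c) :
    #(P.image (insert x)) = #P ∧ IsSunflower (P.image (insert x)) (insert x Y) := by
  refine ⟨card_image_of_injOn fun c hc c' hc' h => ?_, ?_⟩
  · rw [← erase_insert (hx c hc), ← erase_insert (hx c' hc')]
    exact congrArg (·.erase x) h
  · rintro _ ha _ ha' hne
    obtain ⟨c, hc, rfl⟩ := mem_image.1 ha
    obtain ⟨c', hc', rfl⟩ := mem_image.1 ha'
    rw [← insert_inter_distrib, hP hc hc' fun h => hne (h ▸ rfl)]

-- Erdős–Rado: either `q + 1` members are pairwise disjoint, or a small hitting set has a point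
-- `x` lying in many members, and a sunflower in the link of `x` lifts to one in `A`.
theorem exists_sunflower_of_uniform (s q : ℕ) {A : Finset (Finset α)} (hA : ∀ a ∈ A, #a = s)
    (hcard : s ! * q ^ s < #A) : ∃ Y, ∃ P ⊆ A, #P = q + 1 ∧ IsSunflower P Y := by
  induction s generalizing A with
  | zero =>
    refine absurd (card_le_one.2 fun a ha a' ha' => ?_) (by simpa using hcard)
    rw [card_eq_zero.1 (hA a ha), card_eq_zero.1 (hA a' ha')]
  | succ s ih =>
    classical
    by_cases hdisj : ∃ M ⊆ A, (M : Set (Finset α)).PairwiseDisjoint id ∧ q + 1 ≤ #M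
    · obtain ⟨M, hMA, hMdisj, hM⟩ := hdisj
      obtain ⟨P, hPM, hP⟩ := exists_subset_card_eq hM
      refine ⟨∅, P, hPM.trans hMA, hP, fun a ha a' ha' hne => ?_⟩
      exact disjoint_iff_inter_eq_empty.1 (hMdisj (hPM ha) (hPM ha') hne)
    push Not at hdisj
    obtain ⟨U, hU, hhit⟩ := exists_hitting_set (fun a ha => (hA a ha).le)
      fun M hMA hMdisj => Nat.lt_succ_iff.1 (hdisj M hMA hMdisj)
    have hU' : #U * (s ! * q ^ s) ≤ (s + 1)! * q ^ (s + 1) := by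
      rw [Nat.factorial_succ, pow_succ]
      calc #U * (s ! * q ^ s) ≤ q * (s + 1) * (s ! * q ^ s) := Nat.mul_le_mul_right _ hU
        _ = (s + 1) * s ! * (q ^ s * q) := by ring
    obtain ⟨x, -, hx⟩ := exists_lt_card_filter_mem
      (fun a ha => hhit a ha (card_pos.1 (by rw [hA a ha]; omega))) (hU'.trans_lt hcard)
    set Ax := {a ∈ A | x ∈ a}
    have hxAx : ∀ a ∈ Ax, x ∈ a := fun a ha => (mem_filter.1 ha).2
    have herase : Set.InjOn (fun a : Finset α => a.erase x) Ax := fun a ha a' ha' h => by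
      rw [← insert_erase (hxAx a ha), ← insert_erase (hxAx a' ha')]
      exact congrArg (insert x) h
    obtain ⟨Y, P, hPA, hP, hPY⟩ := ih (A := Ax.image fun a => a.erase x)
      (fun c hc => by
        obtain ⟨a, ha, rfl⟩ := mem_image.1 hc
        rw [card_erase_of_mem (hxAx a ha), hA a (mem_filter.1 ha).1, Nat.add_sub_cancel])
      (by rwa [card_image_of_injOn herase])
    have hlift : ∀ c ∈ P, x ∉ c ∧ insert x c ∈ A := fun c hc => by
      obtain ⟨a, ha, rfl⟩ := mem_image.1 (hPA hc)
      exact ⟨notMem_erase x a, by rw [insert_erase (hxAx a ha)]; exact (mem_filter.1 ha).1⟩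
    obtain ⟨hcardP, hsun⟩ := hPY.image_insert fun c hc => (hlift c hc).1
    refine ⟨insert x Y, P.image (insert x), fun a ha => ?_, hcardP.trans hP, hsun⟩
    obtain ⟨c, hc, rfl⟩ := mem_image.1 ha
    exact (hlift c hc).2

theorem exists_sunflower {F : Finset (Finset α)} {k q : ℕ} (hq : 1 ≤ q)
    (hk : ∀ a ∈ F, #a ≤ k) (hcard : (k + 1) * (k ! * q ^ k) < #F) :
    ∃ Y, ∃ P ⊆ F, #P = q + 1 ∧ IsSunflower P Y ∧ ∀ a ∈ P, Y ⊂ a := by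
  obtain ⟨s, hs, hlevel⟩ := exists_lt_card_fiber_of_mul_lt_card_of_maps_to (t := range (k + 1))
    (fun a ha => mem_range.2 (Nat.lt_succ_of_le (hk a ha))) (by rwa [card_range])
  have hsk : s ≤ k := Nat.lt_succ_iff.1 (mem_range.1 hs)
  have : s ! * q ^ s ≤ k ! * q ^ k :=
    Nat.mul_le_mul (Nat.factorial_le hsk) (Nat.pow_le_pow_right hq hsk)
  obtain ⟨Y, P, hPF, hP, hPY⟩ := exists_sunflower_of_uniform s q
    (fun a ha => (mem_filter.1 ha).2) (this.trans_lt hlevel)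
  have hsize : ∀ a ∈ P, #a = s := fun a ha => (mem_filter.1 (hPF ha)).2
  refine ⟨Y, P, hPF.trans (filter_subset _ _), hP, hPY, fun a ha => ?_⟩
  obtain ⟨a', ha', hne⟩ := exists_mem_ne (by omega : 1 < #P) a
  have hYa : Y = a ∩ a' := (hPY ha ha' hne.symm).symm
  refine ssubset_of_subset_of_ne (hYa ▸ inter_subset_left) fun hYa' => hne ?_
  have haa' : a ⊆ a' := by
    rw [← hYa', hYa]
    exact inter_subset_right
  exact (eq_of_subset_of_card_le haa' (by rw [hsize a ha, hsize a' ha'])).symm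

lemma exists_petal_disjoint {P : Finset (Finset α)} {Y B : Finset α}
    (hP : IsSunflower P Y) (hB : #B < #P) :
    ∃ a ∈ P, Disjoint (a \ Y) B := by
  by_contra! h
  refine hB.not_ge (card_le_card_of_forall_subsingleton (fun a x => x ∈ a \ Y)
    (fun a ha => ?_) fun x _ a ha a' ha' => ?_)
  · obtain ⟨x, hxa, hxB⟩ := not_disjoint_iff.1 (h a ha)
    exact ⟨x, hxB, hxa⟩
  · by_contra hne
    have hx : x ∈ a ∩ a' := mem_inter.2 ⟨(mem_sdiff.1 ha.2).1, (mem_sdiff.1 ha'.2).1⟩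
    rw [hP ha.1 ha'.1 hne] at hx
    exact (mem_sdiff.1 ha.2).2 hx

end Sunflower

section Asymptotics

def largeFamilyConst (b : ℕ) : ℕ := 2 ^ b * (b + 1) ^ (2 * b + 2)

lemma largeFamilyConst_pos (b : ℕ) : 0 < largeFamilyConst b := by
  unfold largeFamilyConst
  positivity

lemma succ_mul_factorial_mul_pow_le_largeFamilyConst (b : ℕ) :
    (b + 1) * (b ! * b ^ b) ≤ largeFamilyConst b := by
  have hb : b ^ b ≤ (b + 1) ^ b := Nat.pow_le_pow_left b.le_succ b
  calc (b + 1) * (b ! * b ^ b) ≤ (b + 1) * ((b + 1) ^ b * (b + 1) ^ b) := by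
        gcongr
        exact (Nat.factorial_le_pow b).trans hb
    _ ≤ 1 * (b + 1) ^ (2 * b + 2) := by
        rw [one_mul, ← pow_add, ← pow_succ']
        exact Nat.pow_le_pow_right b.succ_pos (by omega)
    _ ≤ largeFamilyConst b := Nat.mul_le_mul_right _ Nat.one_le_two_pow

lemma two_pow_mul_sq_le_largeFamilyConst (b : ℕ) : 2 ^ b * (b + 1) ^ 2 ≤ largeFamilyConst b :=
  Nat.mul_le_mul_left _ (Nat.pow_le_pow_right b.succ_pos (by omega))

-- `4 * b ≤ n` gives `n ≤ 2 * (n - t - m)` for the binomials `C(n - t, m)` with `t, m ≤ b`.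
def threshold (b : ℕ) : ℕ :=
  4 * b + largeFamilyConst b * (2 ^ b + 1) * (b + 1) * (2 ^ (2 * b) * b ! ^ 2)

lemma threshold_pos (b : ℕ) : 0 < threshold b := by
  have := largeFamilyConst_pos b
  unfold threshold
  positivity

lemma choose_le_sum_range_choose {N m m' : ℕ} (h : m ≤ m') :
    N.choose m ≤ ∑ d ∈ range (m' + 1), N.choose d :=
  single_le_sum (f := fun d => N.choose d) (fun _ _ => Nat.zero_le _)
    (mem_range.2 (Nat.lt_succ_of_le h))

lemma pow_le_two_pow_mul_factorial_mul_choose {n t m : ℕ} (h : 2 * (t + m) ≤ n) :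
    n ^ m ≤ 2 ^ m * (m ! * (n - t).choose m) := by
  rw [← Nat.descFactorial_eq_factorial_mul_choose]
  calc n ^ m ≤ (2 * (n - t + 1 - m)) ^ m := Nat.pow_le_pow_left (by omega) m
    _ ≤ 2 ^ m * (n - t).descFactorial m := by
        rw [mul_pow]
        exact Nat.mul_le_mul_left _ (Nat.pow_sub_le_descFactorial _ _)

lemma mul_pow_le_choose_mul_choose {n t m₁ m₂ C : ℕ} (hm : 1 ≤ m₁ + m₂)
    (h₁ : 2 * (t + m₁) ≤ n) (h₂ : 2 * (t + m₂) ≤ n)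
    (hC : C * (2 ^ (m₁ + m₂) * (m₁ ! * m₂ !)) ≤ n) :
    C * n ^ (m₁ + m₂ - 1) ≤ (n - t).choose m₁ * (n - t).choose m₂ := by
  set K := 2 ^ (m₁ + m₂) * (m₁ ! * m₂ !)
  refine Nat.le_of_mul_le_mul_right ?_ (by positivity : 0 < K)
  calc C * n ^ (m₁ + m₂ - 1) * K = C * K * n ^ (m₁ + m₂ - 1) := by ring
    _ ≤ n * n ^ (m₁ + m₂ - 1) := Nat.mul_le_mul_right _ hC
    _ = n ^ m₁ * n ^ m₂ := by rw [← pow_succ', ← pow_add, Nat.sub_add_cancel hm]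
    _ ≤ 2 ^ m₁ * (m₁ ! * (n - t).choose m₁) * (2 ^ m₂ * (m₂ ! * (n - t).choose m₂)) :=
        Nat.mul_le_mul (pow_le_two_pow_mul_factorial_mul_choose h₁)
          (pow_le_two_pow_mul_factorial_mul_choose h₂)
    _ = (n - t).choose m₁ * (n - t).choose m₂ * K := by ring

lemma mul_pow_le_choose_mul_choose_of_threshold_le {n t b m₁ m₂ C : ℕ} (hn : threshold b ≤ n)
    (ht : t ≤ b) (h₁ : m₁ ≤ b) (h₂ : m₂ ≤ b) (hm : 1 ≤ m₁ + m₂)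
    (hC : C ≤ largeFamilyConst b * (2 ^ b + 1) * (b + 1)) :
    C * n ^ (m₁ + m₂ - 1) ≤ (n - t).choose m₁ * (n - t).choose m₂ := by
  unfold threshold at hn
  refine mul_pow_le_choose_mul_choose hm (by omega) (by omega) (le_trans ?_ (le_of_add_le_right hn))
  rw [sq]
  gcongr <;> omega

end Asymptotics

section Kernel

variable {α : Type*} [DecidableEq α]

lemma card_sdiff_lt_of_disjoint_sdiff {a Y B : Finset α} {t δ : ℕ} (hYa : Y ⊂ a)
    (hdisj : Disjoint (a \ Y) B) (hYB : #(Y ∩ B) < t) (hcr : #(a ∩ B) < t → #(a ∆ B) ≤ δ) :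
    #(B \ Y) < δ := by
  have hmem : ∀ y ∈ B, y ∈ a → y ∈ Y := fun y hyB hya => by
    by_contra hyY
    exact disjoint_left.1 hdisj (mem_sdiff.2 ⟨hya, hyY⟩) hyB
  have haB : a ∩ B ⊆ Y ∩ B := fun y hy => by
    obtain ⟨hya, hyB⟩ := mem_inter.1 hy
    exact mem_inter.2 ⟨hmem y hyB hya, hyB⟩
  have hsub : (a \ Y) ∪ (B \ Y) ⊆ a ∆ B := by
    intro y hy
    rw [mem_symmDiff]
    rcases mem_union.1 hy with hy | hy <;> obtain ⟨hy, hyY⟩ := mem_sdiff.1 hy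
    · exact Or.inl ⟨hy, fun hyB => hyY (hmem y hyB hy)⟩
    · exact Or.inr ⟨hy, fun hya => hyY (hmem y hy hya)⟩
  have hsize := (card_le_card hsub).trans (hcr ((card_le_card haB).trans_lt hYB))
  rw [card_union_of_disjoint (hdisj.mono_right sdiff_subset)] at hsize
  have : 0 < #(a \ Y) := card_pos.2 (sdiff_nonempty.2 hYa.2)
  omega

lemma exists_kernel_of_largeFamilyConst_lt {F G : Finset (Finset α)} {t k l b : ℕ}
    (hkb : k ≤ b) (hlb : l ≤ b) (hb : 1 ≤ b) (hF : ∀ A ∈ F, #A ≤ k) (hG : ∀ B ∈ G, #B ≤ l)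
    (hcr : ∀ A ∈ F, ∀ B ∈ G, #(A ∩ B) < t → #(A ∆ B) ≤ k - t)
    (hFbig : largeFamilyConst b < #F) :
    ∃ Y : Finset α, #Y ≤ k ∧ ∀ B ∈ G, t ≤ #(Y ∩ B) ∨ #(B \ Y) < k - t := by
  have hsun : (k + 1) * (k ! * b ^ k) ≤ largeFamilyConst b :=
    le_trans (by gcongr) (succ_mul_factorial_mul_pow_le_largeFamilyConst b)
  obtain ⟨Y, P, hPF, hP, hPY, hYP⟩ := exists_sunflower hb hF (hsun.trans_lt hFbig)
  obtain ⟨a, ha⟩ : P.Nonempty := card_pos.1 (by omega)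
  refine ⟨Y, (card_le_card (hYP a ha).subset).trans (hF a (hPF ha)), fun B hB => ?_⟩
  refine or_iff_not_imp_left.2 fun hYB => ?_
  obtain ⟨a, ha, hdisj⟩ := exists_petal_disjoint hPY (B := B) (by have := hG B hB; omega)
  exact card_sdiff_lt_of_disjoint_sdiff (hYP a ha) hdisj (not_le.1 hYB) (hcr a (hPF ha) B hB)

lemma exists_card_filter_le_two_pow_mul {G : Finset (Finset α)} {Y : Finset α} {t : ℕ}
    (hYt : t ≤ #Y) :
    ∃ T : Finset α, #T = t ∧ #{B ∈ G | t ≤ #(Y ∩ B)} ≤ 2 ^ #Y * #{B ∈ G | T ⊆ B} := by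
  obtain ⟨T, hTY, hTmax⟩ := exists_max_image (Y.powersetCard t) (fun T => #{B ∈ G | T ⊆ B})
    (powersetCard_nonempty.2 hYt)
  refine ⟨T, (mem_powersetCard.1 hTY).2, (card_le_mul_of_cover (I := Y.powersetCard t)
    (N := #{B ∈ G | T ⊆ B}) (fun T B => T ⊆ B) (fun B hB => ?_) fun T' hT' => ?_).trans ?_⟩
  · obtain ⟨T', hT', hT'card⟩ := exists_subset_card_eq (mem_filter.1 hB).2
    exact ⟨T', mem_powersetCard.2 ⟨hT'.trans inter_subset_left, hT'card⟩,
      hT'.trans inter_subset_right⟩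
  · exact (card_le_card (filter_subset_filter _ (filter_subset _ G))).trans (hTmax T' hT')
  · rw [card_powersetCard]
    exact Nat.mul_le_mul_right _ (Nat.choose_le_two_pow _ _)

variable [Fintype α] [Nonempty α]

lemma card_le_of_not_subset {H : Finset (Finset α)} {T X : Finset α} {c m : ℕ} (hTc : #T < c)
    (hT : ∀ B ∈ H, T ⊆ B) (hc : ∀ B ∈ H, #B ≤ c) (hTX : ¬T ⊆ X)
    (hcr : ∀ B ∈ H, #(X ∩ B) < #T → #(X ∆ B) ≤ m + 1) :
    #H ≤ #X * ((c - #T) * Fintype.card α ^ (c - #T - 1)) + (m + 1) * Fintype.card α ^ m := by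
  -- Members meeting `X` in `#T` points contain `T` and a point of `X \ T`; the others differ
  -- from `X` in a fixed point of `T \ X`.
  obtain ⟨x, hxT, hxX⟩ := not_subset.1 hTX
  have hXT : #(X ∩ T) < #T :=
    card_lt_card ⟨inter_subset_right, fun h => hTX (h.trans inter_subset_left)⟩
  rw [← card_filter_add_card_filter_not (fun B => #T ≤ #(X ∩ B))]
  gcongr
  · refine (card_le_mul_of_cover (I := X \ T) (fun y B => insert y T ⊆ B) (fun B hB => ?_)
      fun y hy => ?_).trans (Nat.mul_le_mul_right _ (card_le_card sdiff_subset))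
    · obtain ⟨hBH, hXB⟩ := mem_filter.1 hB
      obtain ⟨y, hy, hyT⟩ := not_subset.1 fun h : X ∩ B ⊆ T =>
        hXB.not_gt ((card_le_card (subset_inter inter_subset_left h)).trans_lt hXT)
      obtain ⟨hyX, hyB⟩ := mem_inter.1 hy
      exact ⟨y, mem_sdiff.2 ⟨hyX, hyT⟩, insert_subset hyB (hT B hBH)⟩
    · have hins : #(insert y T) = #T + 1 := card_insert_of_notMem (mem_sdiff.1 hy).2
      have := card_le_of_superset (H := {B ∈ {B ∈ H | #T ≤ #(X ∩ B)} | insert y T ⊆ B})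
        (X := insert y T) (c := c) fun B hB =>
          ⟨(mem_filter.1 hB).2, hc B (mem_filter.1 (mem_filter.1 hB).1).1⟩
      rwa [hins, show c - (#T + 1) + 1 = c - #T by omega, ← Nat.sub_sub] at this
  · refine card_le_of_mem_symmDiff (X := X) (x := x) fun B hB => ?_
    obtain ⟨hBH, hXB⟩ := mem_filter.1 hB
    exact ⟨mem_symmDiff.2 (Or.inr ⟨hT B hBH hxT, hxX⟩), hcr B hBH (not_le.1 hXB)⟩

lemma exists_card_le_two_pow_mul_card_star {F G : Finset (Finset α)} {t k l b : ℕ} (htk : t < k)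
    (hkl : k ≤ l) (hlb : l ≤ b) (hF : ∀ A ∈ F, #A ≤ k) (hG : ∀ B ∈ G, #B ≤ l)
    (hcr : ∀ A ∈ F, ∀ B ∈ G, #(A ∩ B) < t → #(A ∆ B) ≤ k - t)
    (hFbig : largeFamilyConst b * Fintype.card α ^ (k - t - 1) < #F)
    (hGbig : largeFamilyConst b * Fintype.card α ^ (l - t - 1) < #G) :
    ∃ T : Finset α, #T = t ∧ #G ≤ 2 ^ b * #{B ∈ G | T ⊆ B} +
      2 ^ b * (b * Fintype.card α ^ (l - t - 1)) := by
  set N := Fintype.card α ^ (l - t - 1)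
  obtain ⟨Y, hYk, hdich⟩ := exists_kernel_of_largeFamilyConst_lt (by omega) hlb (by omega) hF hG hcr
    ((Nat.le_mul_of_pos_right _ (by positivity)).trans_lt hFbig)
  have hbad : #{B ∈ G | ¬t ≤ #(Y ∩ B)} ≤ 2 ^ b * (b * N) := by
    refine (card_le_of_card_sdiff_le (Y := Y) (m := k - t - 1) fun B hB => ?_).trans ?_
    · have := (hdich B (mem_filter.1 hB).1).resolve_left (mem_filter.1 hB).2
      omega
    · exact Nat.mul_le_mul (Nat.pow_le_pow_right two_pos (by omega))
        (Nat.mul_le_mul (by omega) (Nat.pow_le_pow_right Fintype.card_pos (by omega)))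
  have hYt : t ≤ #Y := by
    by_contra hYt
    have hall : #G ≤ #{B ∈ G | ¬t ≤ #(Y ∩ B)} := card_le_card fun B hB =>
      mem_filter.2 ⟨hB, fun h => hYt (h.trans (card_le_card inter_subset_left))⟩
    have : 2 ^ b * (b * N) ≤ largeFamilyConst b * N := by
      rw [← mul_assoc]
      exact Nat.mul_le_mul_right _ (le_trans (by gcongr; nlinarith)
        (two_pow_mul_sq_le_largeFamilyConst b))
    omega
  obtain ⟨T, hT, hstar⟩ := exists_card_filter_le_two_pow_mul (G := G) hYt
  refine ⟨T, hT, ?_⟩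
  rw [← card_filter_add_card_filter_not (fun B => t ≤ #(Y ∩ B))]
  exact add_le_add (hstar.trans (Nat.mul_le_mul_right _ (Nat.pow_le_pow_right two_pos (by omega))))
    hbad

lemma subset_of_forall_subset {F : Finset (Finset α)} {T B : Finset α} {k b : ℕ}
    (hTk : #T < k) (hkb : k ≤ b) (hB : #B ≤ b) (hFT : ∀ A ∈ F, T ⊆ A) (hF : ∀ A ∈ F, #A ≤ k)
    (hcr : ∀ A ∈ F, #(A ∩ B) < #T → #(A ∆ B) ≤ k - #T)
    (hFbig : largeFamilyConst b * Fintype.card α ^ (k - #T - 1) < #F) : T ⊆ B := by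
  by_contra hTB
  set N := Fintype.card α ^ (k - #T - 1)
  have hFB := card_le_of_not_subset (c := k) (m := k - #T - 1) hTk hFT hF hTB fun A hA h => by
    have := hcr A hA (by rwa [inter_comm])
    rw [symmDiff_comm]
    omega
  have : #F ≤ 2 ^ b * (b + 1) ^ 2 * N := by
    calc #F ≤ b * (b * N) + b * N := by
          refine hFB.trans ?_
          gcongr <;> omega
      _ = 1 * ((b * b + b) * N) := by ring
      _ ≤ 2 ^ b * ((b + 1) ^ 2 * N) := by
          gcongr
          · exact Nat.one_le_two_pow
          · nlinarith
      _ = 2 ^ b * (b + 1) ^ 2 * N := by ring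
  have := Nat.mul_le_mul_right N (two_pow_mul_sq_le_largeFamilyConst b)
  omega

theorem exists_common_kernel {F G : Finset (Finset α)} {t k l b : ℕ} (htk : t < k) (hkl : k ≤ l)
    (hlb : l ≤ b) (hF : ∀ A ∈ F, #A ≤ k) (hG : ∀ B ∈ G, #B ≤ l)
    (hcr : ∀ A ∈ F, ∀ B ∈ G, #(A ∩ B) < t → #(A ∆ B) ≤ k - t)
    (hFbig : largeFamilyConst b * Fintype.card α ^ (k - t - 1) < #F)
    (hGbig : largeFamilyConst b * Fintype.card α ^ (l - t - 1) < #G) :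
    ∃ T : Finset α, #T = t ∧ (∀ A ∈ F, T ⊆ A) ∧ ∀ B ∈ G, T ⊆ B := by
  obtain ⟨T, rfl, hstar⟩ :=
    exists_card_le_two_pow_mul_card_star htk hkl hlb hF hG hcr hFbig hGbig
  set n := Fintype.card α
  set N := n ^ (l - #T - 1)
  have hFT : ∀ A ∈ F, T ⊆ A := by
    intro A hA
    by_contra hTA
    have hGT := card_le_of_not_subset (H := {B ∈ G | T ⊆ B}) (c := l) (m := k - #T - 1) (by omega)
      (fun B hB => (mem_filter.1 hB).2) (fun B hB => hG B (mem_filter.1 hB).1) hTA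
      fun B hB h => by have := hcr A hA B (mem_filter.1 hB).1 h; omega
    have : #G ≤ 2 ^ b * (b + 1) ^ 2 * N := by
      calc #G ≤ 2 ^ b * (#A * ((l - #T) * N) + (k - #T - 1 + 1) * n ^ (k - #T - 1)) +
            2 ^ b * (b * N) := hstar.trans (Nat.add_le_add_right (Nat.mul_le_mul_left _ hGT) _)
        _ ≤ 2 ^ b * (b * (b * N) + b * N) + 2 ^ b * (b * N) := by
            gcongr
            · exact (hF A hA).trans (by omega)
            · omega
            · omega
            · exact Nat.pow_le_pow_right Fintype.card_pos (by omega)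
        _ = 2 ^ b * (b * b + 2 * b) * N := by ring
        _ ≤ 2 ^ b * (b + 1) ^ 2 * N := by gcongr; nlinarith
    have := Nat.mul_le_mul_right N (two_pow_mul_sq_le_largeFamilyConst b)
    omega
  exact ⟨T, rfl, hFT, fun B hB => subset_of_forall_subset (by omega) (by omega)
    ((hG B hB).trans hlb) hFT hF (fun A hA => hcr A hA B hB) hFbig⟩

lemma card_mul_card_le_of_forall_subset {F G : Finset (Finset α)} {t l b : ℕ}
    (hn : threshold b ≤ Fintype.card α) (hlb : l ≤ b) (hFt : ∀ A ∈ F, #A = t)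
    (hG : ∀ B ∈ G, #B ≤ l) (hFG : ∀ A ∈ F, ∀ B ∈ G, A ⊆ B) :
    #F * #G ≤ ∑ d ∈ range (l - t + 1), (Fintype.card α - t).choose d := by
  set n := Fintype.card α
  rcases G.eq_empty_or_nonempty with rfl | ⟨B₀, hB₀⟩
  · simp
  rcases le_or_gt #F 1 with hF1 | hF1
  · rcases F.eq_empty_or_nonempty with rfl | ⟨A, hA⟩
    · simp
    calc #F * #G ≤ 1 * #G := Nat.mul_le_mul_right _ hF1
      _ ≤ ∑ d ∈ range (l - t + 1), (n - t).choose d := by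
          rw [one_mul, ← hFt A hA]
          exact card_le_sum_choose_of_superset fun B hB => ⟨hFG A hA B hB, hG B hB⟩
  obtain ⟨A₁, hA₁, A₂, hA₂, hne⟩ := one_lt_card.1 hF1
  have hA₁₂ : t < #(A₁ ∪ A₂) := hFt A₁ hA₁ ▸ card_lt_card ⟨subset_union_left, fun h => hne
    (eq_of_subset_of_card_le (subset_union_right.trans h) (by rw [hFt A₁ hA₁, hFt A₂ hA₂])).symm⟩
  have hl : #(A₁ ∪ A₂) ≤ l :=
    (card_le_card (union_subset (hFG A₁ hA₁ B₀ hB₀) (hFG A₂ hA₂ B₀ hB₀))).trans (hG B₀ hB₀)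
  have hFcard : #F ≤ 2 ^ b := by
    calc #F ≤ #B₀.powerset := card_le_card fun A hA => mem_powerset.2 (hFG A hA B₀ hB₀)
      _ ≤ 2 ^ b := by
          rw [card_powerset]
          exact Nat.pow_le_pow_right two_pos ((hG B₀ hB₀).trans hlb)
  have hGcard : #G ≤ (l - t) * n ^ (0 + (l - t) - 1) := by
    refine (card_le_of_superset (X := A₁ ∪ A₂) (c := l) fun B hB =>
      ⟨union_subset (hFG A₁ hA₁ B hB) (hFG A₂ hA₂ B hB), hG B hB⟩).trans ?_
    exact Nat.mul_le_mul (by omega) (Nat.pow_le_pow_right Fintype.card_pos (by omega))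
  calc #F * #G ≤ 2 ^ b * (l - t) * n ^ (0 + (l - t) - 1) := by
        rw [mul_assoc]
        exact Nat.mul_le_mul hFcard hGcard
    _ ≤ (n - t).choose 0 * (n - t).choose (l - t) :=
        mul_pow_le_choose_mul_choose_of_threshold_le hn (by omega) (Nat.zero_le _) (by omega)
          (by omega) (Nat.mul_le_mul ((Nat.le_succ _).trans
            (Nat.le_mul_of_pos_left _ (largeFamilyConst_pos b))) (by omega))
    _ ≤ ∑ d ∈ range (l - t + 1), (n - t).choose d := by
        rw [Nat.choose_zero_right, one_mul]
        exact choose_le_sum_range_choose le_rfl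

lemma card_mul_card_le_of_card_le {F G : Finset (Finset α)} {t l b : ℕ}
    (hn : threshold b ≤ Fintype.card α) (hlb : l ≤ b)
    (hF : ∀ A ∈ F, #A ≤ t) (hG : ∀ B ∈ G, #B ≤ l)
    (hcr : ∀ A ∈ F, ∀ B ∈ G, #(A ∩ B) < t → A = B) :
    #F * #G ≤ ∑ d ∈ range (l - t + 1), (Fintype.card α - t).choose d := by
  by_cases hsmall : ∃ A₀ ∈ F, #A₀ < t
  · obtain ⟨A₀, hA₀, hA₀t⟩ := hsmall
    have hGA₀ : ∀ B ∈ G, B = A₀ := fun B hB =>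
      (hcr A₀ hA₀ B hB ((card_le_card inter_subset_left).trans_lt hA₀t)).symm
    have hFA₀ : ∀ A ∈ F, ∀ B ∈ G, A = A₀ := fun A hA B hB => (hcr A hA B hB
      ((card_le_card inter_subset_right).trans_lt (hGA₀ B hB ▸ hA₀t))).trans (hGA₀ B hB)
    rcases G.eq_empty_or_nonempty with rfl | ⟨B₀, hB₀⟩
    · simp
    calc #F * #G ≤ 1 * 1 := Nat.mul_le_mul
          (card_le_one.2 fun A hA A' hA' => (hFA₀ A hA B₀ hB₀).trans (hFA₀ A' hA' B₀ hB₀).symm)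
          (card_le_one.2 fun B hB B' hB' => (hGA₀ B hB).trans (hGA₀ B' hB').symm)
      _ ≤ ∑ d ∈ range (l - t + 1), (Fintype.card α - t).choose d :=
          (Nat.choose_zero_right _).symm.le.trans (choose_le_sum_range_choose (Nat.zero_le _))
  push Not at hsmall
  have hFt : ∀ A ∈ F, #A = t := fun A hA => le_antisymm (hF A hA) (hsmall A hA)
  refine card_mul_card_le_of_forall_subset hn hlb hFt hG fun A hA B hB => ?_
  by_contra hAB
  have hlt : #(A ∩ B) < t :=
    hFt A hA ▸ card_lt_card ⟨inter_subset_left, fun h => hAB (h.trans inter_subset_right)⟩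
  exact hAB (hcr A hA B hB hlt ▸ subset_rfl)

end Kernel

section TwoFamilies

variable {α : Type*} [Fintype α] [DecidableEq α]

lemma card_mul_card_le_of_card_le_or_card_le [Nonempty α] {F G : Finset (Finset α)}
    {t k l b : ℕ} (htk : t < k) (hkl : k ≤ l) (hlb : l ≤ b)
    (hF : ∀ A ∈ F, #A ≤ k) (hG : ∀ B ∈ G, #B ≤ l)
    (hcr : ∀ A ∈ F, ∀ B ∈ G, #(A ∩ B) < t → #(A ∆ B) ≤ k - t)
    (hsmall : #F ≤ largeFamilyConst b * Fintype.card α ^ (k - t - 1) ∨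
      #G ≤ largeFamilyConst b * Fintype.card α ^ (l - t - 1)) :
    #F * #G ≤
      largeFamilyConst b * (2 ^ b + 1) * (b + 1) * Fintype.card α ^ ((k - t) + (l - t) - 1) := by
  set n := Fintype.card α
  rcases F.eq_empty_or_nonempty with rfl | ⟨A₀, hA₀⟩
  · simp
  rcases G.eq_empty_or_nonempty with rfl | ⟨B₀, hB₀⟩
  · simp
  rcases hsmall with hFsmall | hGsmall
  · have hGcrude := card_le_of_le_card_inter_or_card_symmDiff_le (X := A₀) (t := t) hG
      fun B hB => (le_or_gt t #(A₀ ∩ B)).imp_right fun h => (hcr A₀ hA₀ B hB h).trans (by omega)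
    have hA₀b : #A₀ ≤ b := (hF A₀ hA₀).trans (by omega)
    calc #F * #G ≤
          largeFamilyConst b * n ^ (k - t - 1) * ((2 ^ b + 1) * ((b + 1) * n ^ (l - t))) :=
          Nat.mul_le_mul hFsmall (hGcrude.trans (by gcongr <;> omega))
      _ = _ := by rw [show (k - t) + (l - t) - 1 = (k - t - 1) + (l - t) by omega, pow_add]; ring
  · have hFcrude := card_le_of_le_card_inter_or_card_symmDiff_le (X := B₀) (t := t) hF
      fun A hA => (le_or_gt t #(B₀ ∩ A)).imp_right fun h => by
        rw [symmDiff_comm]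
        exact hcr A hA B₀ hB₀ (by rwa [inter_comm])
    have hB₀b : #B₀ ≤ b := (hG B₀ hB₀).trans hlb
    calc #F * #G ≤
          (2 ^ b + 1) * ((b + 1) * n ^ (k - t)) * (largeFamilyConst b * n ^ (l - t - 1)) :=
          Nat.mul_le_mul (hFcrude.trans (by gcongr <;> omega)) hGsmall
      _ = _ := by rw [show (k - t) + (l - t) - 1 = (k - t) + (l - t - 1) by omega, pow_add]; ring

theorem card_mul_card_le {F G : Finset (Finset α)} {t k l b : ℕ}
    (hn : threshold b ≤ Fintype.card α) (htk : t ≤ k) (hkl : k ≤ l) (hlb : l ≤ b)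
    (hF : ∀ A ∈ F, #A ≤ k) (hG : ∀ B ∈ G, #B ≤ l)
    (hcr : ∀ A ∈ F, ∀ B ∈ G, #(A ∩ B) < t → #(A ∆ B) ≤ k - t) :
    #F * #G ≤ (∑ d ∈ range (k - t + 1), (Fintype.card α - t).choose d) *
      ∑ d ∈ range (l - t + 1), (Fintype.card α - t).choose d := by
  have : Nonempty α := Fintype.card_pos_iff.1 ((threshold_pos b).trans_le hn)
  obtain rfl | htk := htk.eq_or_lt
  · rw [Nat.sub_self, zero_add, sum_range_one, Nat.choose_zero_right, one_mul]
    refine card_mul_card_le_of_card_le hn hlb hF hG fun A hA B hB h => ?_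
    simpa using hcr A hA B hB h
  by_cases hsmall : #F ≤ largeFamilyConst b * Fintype.card α ^ (k - t - 1) ∨
      #G ≤ largeFamilyConst b * Fintype.card α ^ (l - t - 1)
  · refine (card_mul_card_le_of_card_le_or_card_le htk hkl hlb hF hG hcr hsmall).trans ?_
    refine (mul_pow_le_choose_mul_choose_of_threshold_le hn (t := t) (by omega) (by omega)
      (by omega) (by omega) le_rfl).trans ?_
    exact Nat.mul_le_mul (choose_le_sum_range_choose le_rfl) (choose_le_sum_range_choose le_rfl)
  push Not at hsmall
  obtain ⟨T, rfl, hFT, hGT⟩ := exists_common_kernel htk hkl hlb hF hG hcr hsmall.1 hsmall.2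
  exact Nat.mul_le_mul (card_le_sum_choose_of_superset fun A hA => ⟨hFT A hA, hF A hA⟩)
    (card_le_sum_choose_of_superset fun B hB => ⟨hGT B hB, hG B hB⟩)

end TwoFamilies

lemma prod_le_prod_of_mul_le_mul {ι : Type*} [Fintype ι] (σ : Equiv.Perm ι) (hσ : ∀ i, σ i ≠ i)
    {x y : ι → ℕ} (h : ∀ i j, i ≠ j → x i * x j ≤ y i * y j) : ∏ i, x i ≤ ∏ i, y i := by
  refine (Nat.pow_le_pow_iff_left two_ne_zero).1 ?_
  calc (∏ i, x i) ^ 2 = ∏ i, x i * x (σ i) := by rw [prod_mul_distrib, Equiv.prod_comp, sq]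
    _ ≤ ∏ i, y i * y (σ i) := prod_le_prod' fun i _ => h i (σ i) (hσ i).symm
    _ = (∏ i, y i) ^ 2 := by rw [prod_mul_distrib, Equiv.prod_comp, sq]

end AlmostCrossIntersecting

theorem stmt_16 : ∃ n0 : ℕ → ℕ → ℕ → ℕ,
    ∀ (n r : ℕ) (hr : 2 ≤ r) (t : ℕ) (kk : Fin r → ℕ),
    1 ≤ t → (∀ j, t ≤ kk j) → Monotone kk → (∀ j, kk j ≤ n) →
    n0 (kk ⟨r - 2, by omega⟩) (kk ⟨r - 1, by omega⟩) t ≤ n →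
    ∀ F : Fin r → Finset (Finset (Fin n)),
      (∀ i, ∀ A ∈ F i, A.card ≤ kk i) →
      (∀ i j, i ≠ j → ∀ A ∈ F i, ∀ B ∈ F j, (A ∩ B).card < t →
        ((A \ B) ∪ (B \ A)).card ≤ min (kk i) (kk j) - t) →
      ∏ i, (F i).card ≤
        ∏ i, ∑ j ∈ Finset.range (kk i - t + 1), (n - t).choose (kk i - t - j) := by
  refine ⟨fun _ b _ => AlmostCrossIntersecting.threshold b,
    fun n r hr t kk _ htk hmono _ hn F hF hcr => ?_⟩
  have hmax : ∀ i, kk i ≤ kk ⟨r - 1, by omega⟩ := fun i => hmono (Fin.mk_le_mk.2 (by omega))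
  have hreflect : ∀ m, ∑ j ∈ range (m + 1), (n - t).choose (m - j) =
      ∑ j ∈ range (m + 1), (n - t).choose j := fun m => by
    simpa using sum_range_reflect (fun j => (n - t).choose j) (m + 1)
  simp only [hreflect]
  obtain ⟨m, rfl⟩ : ∃ m, r = m + 2 := ⟨r - 2, by omega⟩
  refine AlmostCrossIntersecting.prod_le_prod_of_mul_le_mul (finRotate _)
    (fun i => by simp [finRotate_apply]) fun i j hij => ?_
  wlog hij' : kk i ≤ kk j generalizing i j
  · rw [mul_comm, mul_comm (∑ _ ∈ _, _)]
    exact this j i hij.symm (le_of_not_ge hij')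
  simpa only [Fintype.card_fin] using AlmostCrossIntersecting.card_mul_card_le (by simpa using hn)
    (htk i) hij' (hmax j) (hF i) (hF j) fun A hA B hB h => by
      simpa [Finset.symmDiff_def, min_eq_left hij'] using hcr i j hij A hA B hB h
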